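/- Every stay-in-a-set (SIAS) game — a qualitative MPRS game in which every player is an avoider — has a Nash equilibrium in deterministic memoryless strategies: there exists a memoryless deterministic strategy profile σ̂ such that for every player n, every initial state s₀, and every (possibly history-dependent) deterministic strategy σ^n of player n, Q̃^n(s₀, σ̂^n, σ̂^{-n}) ≥ Q̃^n(s₀, σ^n, σ̂^{-n}), where here Q̃^n(s₀,σ) = −1 if the play induced by σ from s₀ contains a state of R_n and Q̃^n(s₀,σ) = 0 otherwise. -/

import Mathlib

/-! The vertices from which the play reaches `R` whatever the players do form the set
`inevitable`, on which every move strictly decreases the rank. Off this set the profile keeps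
the play off it, so no target is ever visited. On it, backward induction along the rank
assigns to each vertex a move and the set of players whose target the induced play visits:
the owner moves to a successor whose outcome excludes him if there is one. A player in the
outcome of `v` therefore cannot escape his target by deviating, since all successors of
his own vertices keep him in the outcome and the play must eventually end in `R`. -/

/-- A multi-player reachability/safety (MPRS) game on a finite vertex type `V`
with `N` players.  `succ v` is the (nonempty) set of out-neighbours of `v`,
`owner v` is the player who moves at `v` (the partition `V = V₁ ∪ ... ∪ V_N`),
`target n` is player `n`'s nonempty target set `R_n`, `reacher n` tells whether
player `n` is a reacher (`true`) or an avoider (`false`), and `gamma` is the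
discount factor. -/
structure MPRS (V : Type) [Fintype V] [DecidableEq V] (N : ℕ) where
  succ : V → Finset V
  succ_nonempty : ∀ v, (succ v).Nonempty
  owner : V → Fin N
  target : Fin N → Finset V
  target_nonempty : ∀ n, (target n).Nonempty
  reacher : Fin N → Bool
  gamma : ℝ
  gamma_pos : 0 < gamma
  gamma_lt_one : gamma < 1

namespace MPRS

/-- A deterministic, possibly history-dependent strategy: given the list of past
states and the current vertex, choose a next vertex.  (`none` is the terminal
state `s̄`; a strategy is only ever consulted at non-target vertices owned by
the player, where it must choose an out-neighbour.) -/
abbrev Strat (V : Type) := List (Option V) → V → V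

/-- A strategy is memoryless if it depends only on the current state. -/
def Memoryless {V : Type} (σ : Strat V) : Prop := ∀ h h' v, σ h v = σ h' v

variable {V : Type} [Fintype V] [DecidableEq V] {N : ℕ} (g : MPRS V N)

/-- The total target set `R = R₁ ∪ ... ∪ R_N`. -/
def totalTarget : Finset V := Finset.univ.biUnion g.target

/-- Validity of a strategy for player `n`: at any history ending in a vertex
`v ∈ V_n \ R`, it chooses an out-neighbour of `v`. -/
def ValidStrat (n : Fin N) (σ : Strat V) : Prop :=
  ∀ (h : List (Option V)) (v : V), g.owner v = n → v ∉ g.totalTarget → σ h v ∈ g.succ v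

/-- One step of the deterministic dynamics under profile `σ`, given past
history `h` and current state `s`.  From a target or terminal state the next
state is the terminal state `none`. -/
def step (σ : Fin N → Strat V) (h : List (Option V)) (s : Option V) : Option V :=
  match s with
  | none => none
  | some v => if v ∈ g.totalTarget then none else some (σ (g.owner v) h v)

/-- Auxiliary play function carrying the history. -/
def playAux (g : MPRS V N) (σ : Fin N → Strat V) : ℕ → List (Option V) → Option V → Option V
  | 0, _, s => s
  | t + 1, h, s => playAux g σ t (h ++ [s]) (g.step σ h s)

/-- The induced play: `play σ s₀ t` is the state `s_t` of the unique play
determined by the profile `σ` and the initial state `s₀`. -/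
def play (σ : Fin N → Strat V) (s₀ : Option V) (t : ℕ) : Option V :=
  g.playAux σ t [] s₀

/-- Player `n`'s turn payoff `q^n`. -/
def q (n : Fin N) : Option V → ℝ
  | none => 0
  | some v => if v ∈ g.target n then (if g.reacher n then 1 else -1) else 0

/-- Player `n`'s total quantitative payoff `Q^n(s₀, σ) = ∑ γ^t q^n(s_t)`. -/
noncomputable def Q (n : Fin N) (s₀ : Option V) (σ : Fin N → Strat V) : ℝ :=
  ∑' t : ℕ, g.gamma ^ t * g.q n (g.play σ s₀ t)

/-- Player `n`'s qualitative payoff `Q̃^n(s₀, σ)`. -/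
noncomputable def Qtil (n : Fin N) (s₀ : Option V) (σ : Fin N → Strat V) : ℝ :=
  if 0 < g.Q n s₀ σ then 1 else if g.Q n s₀ σ < 0 then -1 else 0

end MPRS

/-- The qualitative payoff of a stay-in-a-set (SIAS) game: `-1` if the induced
play contains a state of `Rₙ` and `0` otherwise. -/
noncomputable def MPRS.Qsias {V : Type} [Fintype V] [DecidableEq V] {N : ℕ}
    (g : MPRS V N) (n : Fin N) (s₀ : Option V) (σ : Fin N → MPRS.Strat V) : ℝ :=
  @ite ℝ (∃ (t : ℕ) (v : V), g.play σ s₀ t = some v ∧ v ∈ g.target n)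
    (Classical.propDecidable _) (-1) 0


namespace MPRS

variable {V : Type} [Fintype V] [DecidableEq V] {N : ℕ} (g : MPRS V N)

lemma mem_totalTarget_of_mem_target {v : V} {n : Fin N} (hv : v ∈ g.target n) :
    v ∈ g.totalTarget :=
  Finset.mem_biUnion.mpr ⟨n, Finset.mem_univ n, hv⟩

def inevitableWithin : ℕ → Set V
  | 0 => g.totalTarget
  | k + 1 => inevitableWithin k ∪ {v | ↑(g.succ v) ⊆ inevitableWithin k}

def inevitable : Set V := ⋃ k, g.inevitableWithin k

noncomputable def inevitableRank (v : V) : ℕ := sInf {k | v ∈ g.inevitableWithin k}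

lemma inevitableWithin_mono : Monotone g.inevitableWithin :=
  monotone_nat_of_le_succ fun _ => Set.subset_union_left

lemma mem_inevitableWithin_inevitableRank {v : V} (hv : v ∈ g.inevitable) :
    v ∈ g.inevitableWithin (g.inevitableRank v) :=
  Nat.sInf_mem (Set.mem_iUnion.mp hv)

lemma inevitableRank_le {v : V} {k : ℕ} (hv : v ∈ g.inevitableWithin k) :
    g.inevitableRank v ≤ k :=
  Nat.sInf_le hv

lemma inevitable_and_inevitableRank_lt {v w : V} (hv : v ∈ g.inevitable)
    (hR : v ∉ g.totalTarget) (hw : w ∈ g.succ v) :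
    w ∈ g.inevitable ∧ g.inevitableRank w < g.inevitableRank v := by
  have hmem := g.mem_inevitableWithin_inevitableRank hv
  obtain ⟨k, hk⟩ : ∃ k, g.inevitableRank v = k + 1 := by
    refine Nat.exists_eq_succ_of_ne_zero fun h0 => hR ?_
    rw [h0] at hmem
    exact hmem
  have hvk : v ∉ g.inevitableWithin k := fun h => by have := g.inevitableRank_le h; omega
  rw [hk] at hmem
  have hwk : w ∈ g.inevitableWithin k := (hmem.resolve_left hvk) hw
  exact ⟨Set.mem_iUnion.mpr ⟨k, hwk⟩, by have := g.inevitableRank_le hwk; omega⟩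

lemma exists_succ_not_mem_inevitable {v : V} (hv : v ∉ g.inevitable) :
    ∃ w ∈ g.succ v, w ∉ g.inevitable := by
  by_contra! h
  refine hv (Set.mem_iUnion.mpr ⟨(g.succ v).sup g.inevitableRank + 1, Or.inr fun w hw => ?_⟩)
  exact g.inevitableWithin_mono (Finset.le_sup hw) (g.mem_inevitableWithin_inevitableRank (h w hw))

open Classical in
/-- The pair (move at `v`, set of players whose target the play from `v` visits). -/
noncomputable def backwardInduction (v : V) : V × Finset (Fin N) :=
  if hR : v ∈ g.totalTarget then (v, ({n | v ∈ g.target n} : Finset (Fin N)))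
  else if hv : v ∈ g.inevitable then
    let w : g.succ v :=
      if h : ∃ w : g.succ v, g.owner v ∉ (backwardInduction w).2 then h.choose
      else ⟨_, (g.succ_nonempty v).choose_spec⟩
    (w, (backwardInduction w).2)
  else ((g.exists_succ_not_mem_inevitable hv).choose, ∅)
termination_by g.inevitableRank v
decreasing_by all_goals exact (g.inevitable_and_inevitableRank_lt hv hR (Subtype.prop _)).2

variable {g}

lemma mem_backwardInduction_of_mem_totalTarget {v : V} (hR : v ∈ g.totalTarget) (n : Fin N) :
    n ∈ (g.backwardInduction v).2 ↔ v ∈ g.target n := by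
  rw [backwardInduction, dif_pos hR]
  simp

lemma backwardInduction_of_mem_inevitable {v : V} (hv : v ∈ g.inevitable)
    (hR : v ∉ g.totalTarget) :
    (g.backwardInduction v).1 ∈ g.succ v ∧
      (g.backwardInduction (g.backwardInduction v).1).2 = (g.backwardInduction v).2 := by
  rw [backwardInduction, dif_neg hR, dif_pos hv]
  exact ⟨Subtype.prop _, rfl⟩

lemma backwardInduction_of_not_mem_inevitable {v : V} (hv : v ∉ g.inevitable) :
    (g.backwardInduction v).1 ∈ g.succ v ∧ (g.backwardInduction v).1 ∉ g.inevitable ∧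
      (g.backwardInduction v).2 = ∅ := by
  have hR : v ∉ g.totalTarget := fun hR => hv (Set.mem_iUnion.mpr ⟨0, hR⟩)
  rw [backwardInduction, dif_neg hR, dif_neg hv]
  exact ⟨(g.exists_succ_not_mem_inevitable hv).choose_spec.1,
    (g.exists_succ_not_mem_inevitable hv).choose_spec.2, rfl⟩

lemma owner_mem_backwardInduction_of_mem_succ {v w : V} (hv : v ∈ g.inevitable)
    (hR : v ∉ g.totalTarget) (hown : g.owner v ∈ (g.backwardInduction v).2)
    (hw : w ∈ g.succ v) : g.owner v ∈ (g.backwardInduction w).2 := by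
  by_contra hw'
  have hgood : ∃ w : g.succ v, g.owner v ∉ (g.backwardInduction w).2 := ⟨⟨w, hw⟩, hw'⟩
  rw [backwardInduction, dif_neg hR, dif_pos hv] at hown
  simp only [dif_pos hgood] at hown
  exact hgood.choose_spec hown

lemma mem_inevitable_of_mem_backwardInduction {v : V} {n : Fin N}
    (hn : n ∈ (g.backwardInduction v).2) : v ∈ g.inevitable := by
  by_contra hv
  simp [(backwardInduction_of_not_mem_inevitable hv).2.2] at hn

lemma backwardInduction_fst_mem_succ {v : V} (hR : v ∉ g.totalTarget) :
    (g.backwardInduction v).1 ∈ g.succ v := by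
  by_cases hv : v ∈ g.inevitable
  · exact (backwardInduction_of_mem_inevitable hv hR).1
  · exact (backwardInduction_of_not_mem_inevitable hv).1

lemma backwardInduction_fst_snd_subset {v : V} (hR : v ∉ g.totalTarget) :
    (g.backwardInduction (g.backwardInduction v).1).2 ⊆ (g.backwardInduction v).2 := by
  by_cases hv : v ∈ g.inevitable
  · exact (backwardInduction_of_mem_inevitable hv hR).2.subset
  · rw [(backwardInduction_of_not_mem_inevitable
      (backwardInduction_of_not_mem_inevitable hv).2.1).2.2]
    exact Finset.empty_subset _

variable (g)

noncomputable def backwardInductionProfile : Fin N → Strat V :=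
  fun _ _ v => (g.backwardInduction v).1

lemma backwardInductionProfile_valid (n : Fin N) : g.ValidStrat n (g.backwardInductionProfile n) :=
  fun _ _ _ hR => backwardInduction_fst_mem_succ hR

lemma exists_play_succ_eq_step (σ : Fin N → Strat V) (s₀ : Option V) (t : ℕ) :
    ∃ h, g.play σ s₀ (t + 1) = g.step σ h (g.play σ s₀ t) := by
  suffices ∀ h s, ∃ h', g.playAux σ (t + 1) h s = g.step σ h' (g.playAux σ t h s) from
    this [] s₀
  induction t with
  | zero => exact fun h _ => ⟨h, rfl⟩
  | succ t ih => exact fun h s => ih (h ++ [s]) (g.step σ h s)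

lemma play_invariant (σ : Fin N → Strat V) {s₀ : Option V} (P : Option V → Prop) (h₀ : P s₀)
    (hstep : ∀ h s, P s → P (g.step σ h s)) (t : ℕ) : P (g.play σ s₀ t) := by
  induction t with
  | zero => exact h₀
  | succ t ih =>
    obtain ⟨h, hplay⟩ := g.exists_play_succ_eq_step σ s₀ t
    rw [hplay]
    exact hstep h _ ih

lemma step_some_of_not_mem_totalTarget (σ : Fin N → Strat V) (h : List (Option V)) {v : V}
    (hR : v ∉ g.totalTarget) : g.step σ h (some v) = some (σ (g.owner v) h v) := by
  rw [step, if_neg hR]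

lemma exists_play_mem_totalTarget (σ : Fin N → Strat V) (hσ : ∀ m, g.ValidStrat m (σ m))
    {v : V} (hv : v ∈ g.inevitable) :
    ∃ t u, g.play σ (some v) t = some u ∧ u ∈ g.totalTarget := by
  by_contra! hnever
  have descent : ∀ t, ∃ u, g.play σ (some v) t = some u ∧ u ∈ g.inevitable ∧
      g.inevitableRank u + t ≤ g.inevitableRank v := by
    intro t
    induction t with
    | zero => exact ⟨v, rfl, hv, le_rfl⟩
    | succ t ih =>
      obtain ⟨u, hu, huv, hrank⟩ := ih
      obtain ⟨h, hplay⟩ := g.exists_play_succ_eq_step σ (some v) t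
      have huR := hnever t u hu
      obtain ⟨hw, hlt⟩ := g.inevitable_and_inevitableRank_lt huv huR (hσ _ h u rfl huR)
      refine ⟨_, ?_, hw, by omega⟩
      rw [hplay, hu, g.step_some_of_not_mem_totalTarget σ h huR]
  obtain ⟨_, _, _, hrank⟩ := descent (g.inevitableRank v + 1)
  omega

lemma mem_backwardInduction_of_play_mem_target {s₀ : Option V} {t : ℕ} {u : V} {n : Fin N}
    (hu : g.play g.backwardInductionProfile s₀ t = some u) (hun : u ∈ g.target n) :
    ∃ v, s₀ = some v ∧ n ∈ (g.backwardInduction v).2 := by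
  let P : Option V → Prop := fun s => ∀ u, s = some u →
    ∃ v, s₀ = some v ∧ (g.backwardInduction u).2 ⊆ (g.backwardInduction v).2
  have hP : P (g.play g.backwardInductionProfile s₀ t) := by
    refine g.play_invariant _ P (fun u hu => ⟨u, hu, subset_rfl⟩) ?_ t
    rintro h (_ | u) hPu w hw
    · cases hw
    · by_cases huR : u ∈ g.totalTarget
      · simp [step, huR] at hw
      rw [g.step_some_of_not_mem_totalTarget _ h huR, Option.some_inj] at hw
      obtain ⟨v, hv, hsub⟩ := hPu u rfl
      exact ⟨v, hv, hw ▸ (backwardInduction_fst_snd_subset huR).trans hsub⟩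
  obtain ⟨v, hv, hsub⟩ := hP u hu
  exact ⟨v, hv, hsub ((mem_backwardInduction_of_mem_totalTarget
    (g.mem_totalTarget_of_mem_target hun) n).mpr hun)⟩

lemma exists_play_update_mem_target {n : Fin N} {σn : Strat V} (hσn : g.ValidStrat n σn)
    {v : V} (hnv : n ∈ (g.backwardInduction v).2) :
    ∃ t u, g.play (Function.update g.backwardInductionProfile n σn) (some v) t = some u ∧
      u ∈ g.target n := by
  set σ := Function.update g.backwardInductionProfile n σn
  have hσ : ∀ m, g.ValidStrat m (σ m) := by
    intro m
    rcases eq_or_ne m n with rfl | hm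
    · simpa [σ] using hσn
    · simpa [σ, hm] using g.backwardInductionProfile_valid m
  let P : Option V → Prop := fun s => ∀ u, s = some u → n ∈ (g.backwardInduction u).2
  have hP : ∀ t, P (g.play σ (some v) t) := by
    refine g.play_invariant σ P (fun u hu => Option.some_inj.mp hu ▸ hnv) ?_
    rintro h (_ | u) hPu w hw
    · cases hw
    · by_cases huR : u ∈ g.totalTarget
      · simp [step, huR] at hw
      rw [g.step_some_of_not_mem_totalTarget _ h huR, Option.some_inj] at hw
      subst hw
      have hnu := hPu u rfl
      have hu := mem_inevitable_of_mem_backwardInduction hnu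
      rcases eq_or_ne (g.owner u) n with hown | hown
      · simp only [σ, hown, Function.update_self]
        rw [← hown] at hnu ⊢
        exact owner_mem_backwardInduction_of_mem_succ hu huR hnu (hσn h u hown huR)
      · simp only [σ, Function.update_of_ne hown]
        exact (backwardInduction_of_mem_inevitable hu huR).2 ▸ hnu
  obtain ⟨t, u, hu, huR⟩ :=
    g.exists_play_mem_totalTarget σ hσ (mem_inevitable_of_mem_backwardInduction hnv)
  exact ⟨t, u, hu, (mem_backwardInduction_of_mem_totalTarget huR n).mp (hP t u hu)⟩

end MPRS

theorem SIAS_has_memoryless_NE_general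
    {V : Type} [Fintype V] [DecidableEq V] {N : ℕ} (g : MPRS V N) :
    ∃ σhat : Fin N → MPRS.Strat V,
      (∀ n, g.ValidStrat n (σhat n)) ∧
      (∀ n, MPRS.Memoryless (σhat n)) ∧
      (∀ (n : Fin N) (s₀ : Option V) (σn : MPRS.Strat V), g.ValidStrat n σn →
        g.Qsias n s₀ (Function.update σhat n σn) ≤ g.Qsias n s₀ σhat) := by
  refine ⟨g.backwardInductionProfile, g.backwardInductionProfile_valid,
    fun _ _ _ _ => rfl, fun n s₀ σn hσn => ?_⟩
  unfold MPRS.Qsias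
  by_cases hhit : ∃ t u, g.play g.backwardInductionProfile s₀ t = some u ∧ u ∈ g.target n
  · obtain ⟨t, u, hu, hun⟩ := hhit
    obtain ⟨v, rfl, hnv⟩ := g.mem_backwardInduction_of_play_mem_target hu hun
    rw [if_pos (g.exists_play_update_mem_target hσn hnv)]
    split_ifs <;> norm_num
  · rw [if_neg hhit]
    split_ifs <;> norm_num

/-- Every stay-in-a-set (SIAS) game — a qualitative MPRS game in which every
player is an avoider — has a Nash equilibrium in deterministic memoryless
strategies. -/
theorem SIAS_has_memoryless_NE
    {V : Type} [Fintype V] [DecidableEq V] {N : ℕ} (g : MPRS V N)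
    (hsias : ∀ n : Fin N, g.reacher n = false) :
    ∃ σhat : Fin N → MPRS.Strat V,
      (∀ n, g.ValidStrat n (σhat n)) ∧
      (∀ n, MPRS.Memoryless (σhat n)) ∧
      (∀ (n : Fin N) (s₀ : Option V) (σn : MPRS.Strat V), g.ValidStrat n σn →
        g.Qsias n s₀ (Function.update σhat n σn) ≤ g.Qsias n s₀ σhat) :=
  SIAS_has_memoryless_NE_general g
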